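/- arXiv:1111.1078 — 4 statements merged into one kernel-verified Lean document; each statement's English description precedes it below -/
import Mathlib

section
/- Let X be a supercritical offspring distribution with X(0) > 0 and extinction probability q, and let f_K be the K-th iterate of the generating function f of X. Then there exists c > 0 such that for all K ≥ 1, |q - f_K(0)| ≤ exp(-cK). -/
/-!
On `[0, q]` the generating function `f` is monotone, maps `[0, q]` into itself, and by
convexity `q - f x = f q - f x ≤ f'(q) (q - x)`. So `q - f_K(0) ≤ f'(q)^K q`, and it
remains to see `f'(q) < 1`: since `E[X] > 1` some `X(i)`, `i ≥ 2`, is positive, so `f` is strictly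
convex and its chord over `[q, 1]`, which has slope `(1 - q) / (1 - q) = 1`, is steeper than its
tangent at `q`.
-/

open MeasureTheory Set
open scoped ENNReal

lemma pow_sub_pow_le_nat_mul_pow_pred_mul {x y : ℝ} (hx : 0 ≤ x) (hxy : x ≤ y) (n : ℕ) :
    y ^ n - x ^ n ≤ n * y ^ (n - 1) * (y - x) := by
  have h := abs_pow_sub_pow_le y x n
  rw [abs_of_nonneg (sub_nonneg.2 (pow_le_pow_left₀ hx hxy n)), abs_of_nonneg (sub_nonneg.2 hxy),
    abs_of_nonneg hx, abs_of_nonneg (hx.trans hxy), max_eq_left hxy] at h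
  linarith

lemma nat_mul_pow_pred_mul_le_pow_sub_pow {x y : ℝ} (hx : 0 ≤ x) (hxy : x ≤ y) (n : ℕ) :
    n * x ^ (n - 1) * (y - x) ≤ y ^ n - x ^ n := by
  rcases hxy.eq_or_lt with rfl | hxy
  · simp
  have h := (convexOn_pow n).le_slope_of_hasDerivAt hx (hx.trans hxy.le) hxy (hasDerivAt_pow n x)
  rwa [slope_def_field, le_div_iff₀ (sub_pos.2 hxy)] at h

lemma nat_mul_pow_pred_mul_lt_pow_sub_pow {x y : ℝ} (hx : 0 ≤ x) (hxy : x < y) {n : ℕ}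
    (hn : 2 ≤ n) : n * x ^ (n - 1) * (y - x) < y ^ n - x ^ n := by
  have h := (strictConvexOn_pow hn).lt_slope_of_hasDerivAt hx (hx.trans hxy.le) hxy
    (hasDerivAt_pow n x)
  rwa [slope_def_field, lt_div_iff₀ (sub_pos.2 hxy)] at h

lemma summable_nat_mul_pow_pred {x : ℝ} (hx : ‖x‖ < 1) :
    Summable fun n : ℕ => (n : ℝ) * x ^ (n - 1) := by
  rw [← summable_nat_add_iff 1]
  refine ((summable_pow_mul_geometric_of_norm_lt_one 1 hx).add
    (summable_geometric_of_norm_lt_one hx)).congr fun n => ?_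
  simp only [Nat.add_sub_cancel]
  push_cast
  ring

lemma sub_iterate_le_pow_mul {g : ℝ → ℝ} {s : Set ℝ} {q L : ℝ} (hL : 0 ≤ L) (hmaps : MapsTo g s s)
    (hcontr : ∀ x ∈ s, q - g x ≤ L * (q - x)) (K : ℕ) {x : ℝ} (hx : x ∈ s) :
    q - g^[K] x ≤ L ^ K * (q - x) := by
  induction K with
  | zero => simp
  | succ K ih =>
    rw [Function.iterate_succ_apply']
    calc q - g (g^[K] x) ≤ L * (q - g^[K] x) := hcontr _ (hmaps.iterate K hx)
      _ ≤ L * (L ^ K * (q - x)) := mul_le_mul_of_nonneg_left ih hL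
      _ = L ^ (K + 1) * (q - x) := by ring

lemma exists_pos_pow_le_exp_neg_mul {L : ℝ} (hL0 : 0 ≤ L) (hL1 : L < 1) :
    ∃ c > 0, ∀ K : ℕ, L ^ K ≤ Real.exp (-c * K) := by
  set M := max L (1 / 2)
  have hM0 : 0 < M := lt_max_of_lt_right (by norm_num)
  refine ⟨-Real.log M, neg_pos.2 (Real.log_neg hM0 (max_lt hL1 (by norm_num))), fun K => ?_⟩
  rw [neg_neg, mul_comm, Real.exp_nat_mul, Real.exp_log hM0]
  exact pow_le_pow_left₀ hL0 (le_max_left _ _) K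

noncomputable def pgf (p : ℕ → ℝ) (x : ℝ) : ℝ := ∑' i, p i * x ^ i

noncomputable def pgfDeriv (p : ℕ → ℝ) (x : ℝ) : ℝ := ∑' i, p i * (i * x ^ (i - 1))

section GeneratingFunction

variable {p : ℕ → ℝ} {x y : ℝ}

lemma summable_mul_pow (hp : ∀ i, 0 ≤ p i) (hsum : Summable p) (hx0 : 0 ≤ x) (hx1 : x ≤ 1) :
    Summable fun i => p i * x ^ i :=
  hsum.of_nonneg_of_le (fun i => mul_nonneg (hp i) (pow_nonneg hx0 i))
    fun i => mul_le_of_le_one_right (hp i) (pow_le_one₀ hx0 hx1)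

lemma summable_mul_nat_mul_pow_pred (hp : ∀ i, 0 ≤ p i) (hsum : Summable p) (hx0 : 0 ≤ x)
    (hx1 : x < 1) : Summable fun i : ℕ => p i * (i * x ^ (i - 1)) := by
  have hbound : ∀ i, p i ≤ ∑' j, p j := fun i => hsum.le_tsum i fun j _ => hp j
  have hgeom := summable_nat_mul_pow_pred (x := x) (by rwa [Real.norm_of_nonneg hx0])
  refine (hgeom.mul_left (∑' j, p j)).of_nonneg_of_le
    (fun i => mul_nonneg (hp i) (by positivity)) fun i => ?_
  exact mul_le_mul_of_nonneg_right (hbound i) (by positivity)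

lemma pgf_nonneg (hp : ∀ i, 0 ≤ p i) (hx : 0 ≤ x) : 0 ≤ pgf p x :=
  tsum_nonneg fun i => mul_nonneg (hp i) (pow_nonneg hx i)

lemma pgfDeriv_nonneg (hp : ∀ i, 0 ≤ p i) (hx : 0 ≤ x) : 0 ≤ pgfDeriv p x :=
  tsum_nonneg fun i => mul_nonneg (hp i) (by positivity)

lemma pgf_one (hsum : HasSum p 1) : pgf p 1 = 1 := by
  simpa [pgf] using hsum.tsum_eq

lemma pgf_le_pgf (hp : ∀ i, 0 ≤ p i) (hsum : Summable p) (hx : 0 ≤ x) (hxy : x ≤ y)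
    (hy : y ≤ 1) : pgf p x ≤ pgf p y :=
  (summable_mul_pow hp hsum hx (hxy.trans hy)).tsum_le_tsum
    (fun i => mul_le_mul_of_nonneg_left (pow_le_pow_left₀ hx hxy i) (hp i))
    (summable_mul_pow hp hsum (hx.trans hxy) hy)

lemma pgf_sub_pgf_le (hp : ∀ i, 0 ≤ p i) (hsum : Summable p) (hx : 0 ≤ x) (hxy : x ≤ y)
    (hy : y < 1) : pgf p y - pgf p x ≤ pgfDeriv p y * (y - x) := by
  have hsx := summable_mul_pow hp hsum hx (hxy.trans hy.le)
  have hsy := summable_mul_pow hp hsum (hx.trans hxy) hy.le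
  rw [pgf, pgf, pgfDeriv, ← hsy.tsum_sub hsx, ← tsum_mul_right]
  refine (hsy.sub hsx).tsum_le_tsum (fun i => ?_)
    ((summable_mul_nat_mul_pow_pred hp hsum (hx.trans hxy) hy).mul_right _)
  calc p i * y ^ i - p i * x ^ i = p i * (y ^ i - x ^ i) := by ring
    _ ≤ p i * (i * y ^ (i - 1) * (y - x)) :=
      mul_le_mul_of_nonneg_left (pow_sub_pow_le_nat_mul_pow_pred_mul hx hxy i) (hp i)
    _ = p i * (i * y ^ (i - 1)) * (y - x) := by ring

lemma pgfDeriv_mul_sub_lt_pgf_sub_pgf (hp : ∀ i, 0 ≤ p i) (hsum : Summable p) {n : ℕ}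
    (hn : 2 ≤ n) (hpn : 0 < p n) (hx : 0 ≤ x) (hxy : x < y) (hy : y ≤ 1) :
    pgfDeriv p x * (y - x) < pgf p y - pgf p x := by
  have hsx := summable_mul_pow hp hsum hx (hxy.le.trans hy)
  have hsy := summable_mul_pow hp hsum (hx.trans hxy.le) hy
  rw [pgf, pgf, pgfDeriv, ← hsy.tsum_sub hsx, ← tsum_mul_right]
  refine ((summable_mul_nat_mul_pow_pred hp hsum hx (hxy.trans_le hy)).mul_right _).tsum_lt_tsum
    (i := n) (fun i => ?_) ?_ (hsy.sub hsx)
  · rw [mul_assoc, ← mul_sub]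
    exact mul_le_mul_of_nonneg_left (nat_mul_pow_pred_mul_le_pow_sub_pow hx hxy.le i) (hp i)
  · rw [mul_assoc, ← mul_sub]
    exact mul_lt_mul_of_pos_left (nat_mul_pow_pred_mul_lt_pow_sub_pow hx hxy hn) hpn

lemma pgfDeriv_lt_one_of_pgf_eq (hp : ∀ i, 0 ≤ p i) (hsum : HasSum p 1) {n : ℕ} (hn : 2 ≤ n)
    (hpn : 0 < p n) {q : ℝ} (hq0 : 0 ≤ q) (hq1 : q < 1) (hfix : pgf p q = q) :
    pgfDeriv p q < 1 := by
  have h := pgfDeriv_mul_sub_lt_pgf_sub_pgf hp hsum.summable hn hpn hq0 hq1 le_rfl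
  rw [pgf_one hsum, hfix] at h
  exact (mul_lt_iff_lt_one_left (sub_pos.2 hq1)).1 (by linarith)

lemma pgf_mapsTo_Icc (hp : ∀ i, 0 ≤ p i) (hsum : Summable p) {q : ℝ} (hq : q ≤ 1)
    (hfix : pgf p q = q) : MapsTo (pgf p) (Icc 0 q) (Icc 0 q) := fun _ hx =>
  ⟨pgf_nonneg hp hx.1, hfix ▸ pgf_le_pgf hp hsum hx.1 hx.2 hq⟩

end GeneratingFunction

lemma hasSum_measure_singleton_toReal {α : Type*} [MeasurableSpace α] [Countable α]
    [MeasurableSingletonClass α] (μ : Measure α) [IsProbabilityMeasure μ] :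
    HasSum (fun a => (μ {a}).toReal) 1 := by
  have h : ∑' a, μ {a} = 1 := μ.toPMF.tsum_coe
  have hsum := ENNReal.hasSum_toReal (f := fun a => μ {a}) (by rw [h]; exact ENNReal.one_ne_top)
  rwa [← ENNReal.tsum_toReal_eq fun a => measure_ne_top μ {a}, h, ENNReal.toReal_one] at hsum

lemma exists_two_le_measure_singleton_pos (μ : Measure ℕ) [IsProbabilityMeasure μ]
    (hmean : 1 < ∑' n : ℕ, (n : ℝ≥0∞) * μ {n}) : ∃ n, 2 ≤ n ∧ 0 < μ {n} := by
  by_contra! h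
  have hzero : ∀ n, 2 ≤ n → μ {n} = 0 := fun n hn => nonpos_iff_eq_zero.1 (h n hn)
  have hmean_eq : ∑' n : ℕ, (n : ℝ≥0∞) * μ {n} = μ {1} := by
    rw [tsum_eq_single 1 fun n hn => ?_]
    · simp
    · rcases Nat.lt_or_ge n 2 with hn2 | hn2
      · simp [show n = 0 by omega]
      · simp [hzero n hn2]
  exact (hmean_eq ▸ hmean).not_ge prob_le_one

theorem stmt6_general
    (pX : Measure ℕ) [IsProbabilityMeasure pX]
    (hmean : 1 < ∑' n : ℕ, (n : ℝ≥0∞) * pX {n})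
    (f : ℝ → ℝ)
    (hf : ∀ x : ℝ, f x = ∑' i : ℕ, (pX {i}).toReal * x ^ i)
    (q : ℝ) (hq01 : q ∈ Set.Ioo (0 : ℝ) 1)
    (hq : f q = q) :
    ∃ c > (0 : ℝ), ∀ K : ℕ, 1 ≤ K → |q - f^[K] 0| ≤ Real.exp (-c * K) := by
  obtain ⟨hq0, hq1⟩ := hq01
  set p : ℕ → ℝ := fun i => (pX {i}).toReal
  have hp : ∀ i, 0 ≤ p i := fun i => ENNReal.toReal_nonneg
  have hsum : HasSum p 1 := hasSum_measure_singleton_toReal pX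
  obtain rfl : f = pgf p := funext hf
  obtain ⟨n, hn, hpn⟩ := exists_two_le_measure_singleton_pos pX hmean
  have hL1 := pgfDeriv_lt_one_of_pgf_eq hp hsum hn
    (ENNReal.toReal_pos hpn.ne' (measure_ne_top pX _)) hq0.le hq1 hq
  have hmaps := pgf_mapsTo_Icc hp hsum.summable hq1.le hq
  have hcontr : ∀ x ∈ Icc 0 q, q - pgf p x ≤ pgfDeriv p q * (q - x) := fun x hx => by
    simpa only [hq] using pgf_sub_pgf_le hp hsum.summable hx.1 hx.2 hq1
  have hL0 := pgfDeriv_nonneg hp hq0.le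
  obtain ⟨c, hc, hpow⟩ := exists_pos_pow_le_exp_neg_mul hL0 hL1
  refine ⟨c, hc, fun K _ => ?_⟩
  have h0 : (0 : ℝ) ∈ Icc 0 q := ⟨le_rfl, hq0.le⟩
  rw [abs_of_nonneg (sub_nonneg.2 (hmaps.iterate K h0).2)]
  calc q - (pgf p)^[K] 0 ≤ pgfDeriv p q ^ K * (q - 0) :=
        sub_iterate_le_pow_mul hL0 hmaps hcontr K h0
    _ ≤ pgfDeriv p q ^ K :=
        mul_le_of_le_one_right (pow_nonneg hL0 K) (by linarith)
    _ ≤ Real.exp (-c * K) := hpow K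

/-- if `f` is the generating function of a supercritical offspring law with
fixed point `q ∈ (0,1)`, then `|q - f^[K](0)| ≤ exp(-cK)` for some `c > 0` and all `K ≥ 1`. -/
theorem stmt6
    (pX : Measure ℕ) [IsProbabilityMeasure pX]
    (hmean : 1 < ∑' n : ℕ, (n : ℝ≥0∞) * pX {n})
    (h0 : 0 < pX {0})
    (f : ℝ → ℝ)
    (hf : ∀ x : ℝ, f x = ∑' i : ℕ, (pX {i}).toReal * x ^ i)
    (q : ℝ) (hq01 : q ∈ Set.Ioo (0 : ℝ) 1)
    (hq : f q = q) :
    ∃ c > (0 : ℝ), ∀ K : ℕ, 1 ≤ K → |q - f^[K] 0| ≤ Real.exp (-c * K) :=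
  stmt6_general pX hmean f hf q hq01 hq
end

section
/- Let μ⋆ > 1 be strictly less than the mean of a supercritical offspring distribution X with X(0) > 0. Then there exist δ > 0 and β > 0 such that for all integers k ≥ 0 and all n ≥ 1, P(Z^n_k > δ μ⋆^k) ≥ β, where Z^n is the Galton-Watson process with offspring X started from n individuals. -/
open MeasureTheory ProbabilityTheory Filter
open scoped ENNReal

/-- Galton-Watson process with offspring array `ξ`, started from `a` individuals. -/
noncomputable def gw {Ω : Type*} (ξ : ℕ × ℕ → Ω → ℕ) (a : ℕ) : ℕ → Ω → ℕ
  | 0 => fun _ => a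
  | k + 1 => fun ω => ∑ i ∈ Finset.range (gw ξ a k ω), ξ (k, i) ω

/-- Galton-Watson process censored at level `N`, started at `N`. -/
noncomputable def cgw {Ω : Type*} (ξ : ℕ × ℕ → Ω → ℕ) (N : ℕ) : ℕ → Ω → ℕ
  | 0 => fun _ => N
  | k + 1 => fun ω =>
      if 0 < cgw ξ N k ω then min N (∑ i ∈ Finset.range (cgw ξ N k ω), ξ (k, i) ω) else 0

/-!
Truncating the offspring law at a large level `L` keeps its mean `m` above `μ⋆`, bounds the
offspring, and can only make the process smaller. For bounded offspring, Wald's identities for the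
random sums `Z (k + 1) = ∑ i < Z k, ξ (k, i)` give `E Z k = m ^ k` and `E (Z k)² ≤ C m ^ (2k)`, so
the Paley–Zygmund inequality yields `P(Z k > m ^ k / 2) ≥ 1 / (4C)` for every `k`. A larger initial
population only increases `Z k`.
-/

section GaltonWatson

lemma gw_mono {Ω : Type*} {ξ₁ ξ₂ : ℕ × ℕ → Ω → ℕ} (hξ : ∀ p ω, ξ₁ p ω ≤ ξ₂ p ω) {a b : ℕ}
    (hab : a ≤ b) (k : ℕ) (ω : Ω) : gw ξ₁ a k ω ≤ gw ξ₂ b k ω := by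
  induction k with
  | zero => exact hab
  | succ k ih =>
    calc gw ξ₁ a (k + 1) ω ≤ ∑ i ∈ Finset.range (gw ξ₁ a k ω), ξ₂ (k, i) ω :=
          Finset.sum_le_sum fun i _ => hξ _ _
      _ ≤ gw ξ₂ b (k + 1) ω := Finset.sum_le_sum_of_subset (Finset.range_subset_range.2 ih)

lemma gw_le_mul_pow {Ω : Type*} {ξ : ℕ × ℕ → Ω → ℕ} {L : ℕ} (hξ : ∀ p ω, ξ p ω ≤ L)
    (a k : ℕ) (ω : Ω) : gw ξ a k ω ≤ a * L ^ k := by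
  induction k with
  | zero => simp [gw]
  | succ k ih =>
    calc gw ξ a (k + 1) ω ≤ gw ξ a k ω * L := by
          simpa [gw] using Finset.sum_le_card_nsmul (Finset.range (gw ξ a k ω)) _ _
            fun i _ => hξ (k, i) ω
      _ ≤ a * L ^ (k + 1) := by rw [pow_succ, ← mul_assoc]; exact Nat.mul_le_mul_right _ ih

lemma measurable_sum_range {Ω : Type*} [MeasurableSpace Ω] {N : Ω → ℕ} {f : ℕ → Ω → ℕ}
    (hN : Measurable N) (hf : ∀ i, Measurable (f i)) :
    Measurable fun ω => ∑ i ∈ Finset.range (N ω), f i ω := by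
  have : Measurable fun q : Ω × ℕ => ∑ i ∈ Finset.range q.2, f i q.1 :=
    measurable_from_prod_countable_left fun n =>
      Finset.measurable_sum (Finset.range n) fun i _ => hf i
  exact this.comp (measurable_id.prodMk hN)

lemma measurable_gw {Ω : Type*} [MeasurableSpace Ω] {ξ : ℕ × ℕ → Ω → ℕ} (a : ℕ) {k : ℕ}
    (hξ : ∀ p : ℕ × ℕ, p.1 < k → Measurable (ξ p)) : Measurable (gw ξ a k) := by
  induction k with
  | zero => exact measurable_const
  | succ k ih =>
    exact measurable_sum_range (ih fun p hp => hξ p (Nat.lt_succ_of_lt hp))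
      fun i => hξ (k, i) (Nat.lt_succ_self k)

lemma indepFun_gw_offspring {Ω : Type*} [MeasurableSpace Ω] {μ : Measure Ω}
    {ξ : ℕ × ℕ → Ω → ℕ} (hξ : ∀ p, Measurable (ξ p)) (hind : iIndepFun ξ μ) (a k i j : ℕ) :
    IndepFun (gw ξ a k) (fun ω => (ξ (k, i) ω, ξ (k, j) ω)) μ := by
  -- `gw ξ a k` only sees the offspring of generations `< k`, independent of generation `k`.
  let σ : ℕ × ℕ → MeasurableSpace Ω := fun p => MeasurableSpace.comap (ξ p) inferInstance
  have hσ : ∀ p, Measurable[σ p] (ξ p) := fun p => comap_measurable (ξ p)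
  have hpast := indep_iSup_of_disjoint (fun p => (hξ p).comap_le) hind
    (S := {p | p.1 < k}) (T := {p | p.1 = k}) (Set.disjoint_left.2 fun p hS hT => by
      simp_all)
  rw [IndepFun_iff_Indep]
  refine indep_of_indep_of_le hpast (Measurable.comap_le ?_) (Measurable.comap_le ?_)
  · exact @measurable_gw _ (⨆ p ∈ {p : ℕ × ℕ | p.1 < k}, σ p) _ a k fun p hp =>
      (hσ p).mono (le_iSup₂ (f := fun p (_ : p ∈ {p : ℕ × ℕ | p.1 < k}) => σ p) p hp) le_rfl
  · refine Measurable.prodMk ?_ ?_ <;>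
    exact (hσ _).mono (le_iSup₂ (f := fun p (_ : p ∈ {p : ℕ × ℕ | p.1 = k}) => σ p) _ rfl) le_rfl

end GaltonWatson

section PaleyZygmund

variable {α : Type*} [MeasurableSpace α] {μ : Measure α}

lemma sq_integral_mul_le {f g : α → ℝ} (hf : MemLp f 2 μ) (hg : MemLp g 2 μ) :
    (∫ x, f x * g x ∂μ) ^ 2 ≤ (∫ x, f x ^ 2 ∂μ) * ∫ x, g x ^ 2 ∂μ := by
  have hquad : ∀ t : ℝ, 0 ≤ (∫ x, f x ^ 2 ∂μ) * (t * t) + 2 * (∫ x, f x * g x ∂μ) * t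
      + ∫ x, g x ^ 2 ∂μ := by
    intro t
    have hexp : ∫ x, (t * f x + g x) ^ 2 ∂μ = (∫ x, f x ^ 2 ∂μ) * (t * t)
        + 2 * (∫ x, f x * g x ∂μ) * t + ∫ x, g x ^ 2 ∂μ := by
      have hfg : Integrable (fun x => f x * g x) μ := hf.integrable_mul hg
      calc ∫ x, (t * f x + g x) ^ 2 ∂μ
          = ∫ x, ((t * t) * f x ^ 2 + (2 * t) * (f x * g x) + g x ^ 2) ∂μ := by
            congr 1; ext x; ring
        _ = _ := by
            have hf2 := hf.integrable_sq.const_mul (t * t)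
            have hf2fg : Integrable (fun x => t * t * f x ^ 2 + 2 * t * (f x * g x)) μ :=
              hf2.add (hfg.const_mul _)
            rw [integral_add hf2fg hg.integrable_sq,
              integral_add hf2 (hfg.const_mul _), integral_const_mul, integral_const_mul]
            ring
    exact hexp ▸ integral_nonneg fun x => sq_nonneg _
  have := discrim_le_zero hquad
  rw [discrim] at this
  linarith

variable [IsProbabilityMeasure μ]

theorem paley_zygmund {Z : α → ℝ} (hZm : Measurable Z) (hZ0 : 0 ≤ Z) (hZ : MemLp Z 2 μ)
    {θ : ℝ} (hθ0 : 0 ≤ θ) (hθ1 : θ ≤ 1) :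
    (1 - θ) ^ 2 * (∫ x, Z x ∂μ) ^ 2 ≤ μ.real {x | θ * ∫ x, Z x ∂μ < Z x} * ∫ x, Z x ^ 2 ∂μ := by
  set A := {x | θ * ∫ x, Z x ∂μ < Z x}
  have hA : MeasurableSet A := measurableSet_lt measurable_const hZm
  have hEZ : 0 ≤ ∫ x, Z x ∂μ := integral_nonneg hZ0
  have hsmall : ∫ x in Aᶜ, Z x ∂μ ≤ θ * ∫ x, Z x ∂μ :=
    calc ∫ x in Aᶜ, Z x ∂μ ≤ ∫ x in Aᶜ, θ * ∫ x, Z x ∂μ ∂μ :=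
          setIntegral_mono_on (hZ.integrable one_le_two).integrableOn (integrable_const _)
            hA.compl fun x hx => not_lt.1 hx
      _ = μ.real Aᶜ * (θ * ∫ x, Z x ∂μ) := by rw [setIntegral_const, smul_eq_mul]
      _ ≤ θ * ∫ x, Z x ∂μ := mul_le_of_le_one_left (by positivity) measureReal_le_one
  have hlarge : (1 - θ) * ∫ x, Z x ∂μ ≤ ∫ x in A, Z x ∂μ := by
    have := integral_add_compl hA (hZ.integrable one_le_two)
    linarith
  have hCS : (∫ x in A, Z x ∂μ) ^ 2 ≤ (∫ x in A, Z x ^ 2 ∂μ) * μ.real A := by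
    simpa [setIntegral_const] using
      sq_integral_mul_le (μ := μ.restrict A) (hZ.restrict A) (memLp_const (1 : ℝ))
  calc (1 - θ) ^ 2 * (∫ x, Z x ∂μ) ^ 2 = ((1 - θ) * ∫ x, Z x ∂μ) ^ 2 := by ring
    _ ≤ (∫ x in A, Z x ∂μ) ^ 2 := pow_le_pow_left₀ (by nlinarith) hlarge 2
    _ ≤ (∫ x in A, Z x ^ 2 ∂μ) * μ.real A := hCS
    _ ≤ μ.real A * ∫ x, Z x ^ 2 ∂μ := by
        rw [mul_comm]
        exact mul_le_mul_of_nonneg_left (setIntegral_le_integral hZ.integrable_sq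
          (Eventually.of_forall fun x => sq_nonneg _)) measureReal_nonneg

end PaleyZygmund

lemma sum_range_eq_sum_range_ite_mul {n B : ℕ} (h : n ≤ B) (f : ℕ → ℝ) :
    ∑ i ∈ Finset.range n, f i = ∑ i ∈ Finset.range B, (if i < n then 1 else 0) * f i := by
  simp only [ite_mul, one_mul, zero_mul]
  rw [← Finset.sum_filter]
  congr 1
  ext i
  simp only [Finset.mem_range, Finset.mem_filter]
  omega

lemma sq_sum_range_eq_sum_range_ite_mul {n B : ℕ} (h : n ≤ B) (f : ℕ → ℝ) :
    (∑ i ∈ Finset.range n, f i) ^ 2 = ∑ i ∈ Finset.range B, ∑ j ∈ Finset.range B,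
      (if i < n ∧ j < n then 1 else 0) * (f i * f j) := by
  rw [sum_range_eq_sum_range_ite_mul h, sq, Finset.sum_mul_sum]
  refine Finset.sum_congr rfl fun i _ => Finset.sum_congr rfl fun j _ => ?_
  by_cases hi : i < n <;> by_cases hj : j < n <;> simp [hi, hj]

section RandomSum

variable {Ω : Type*} [MeasurableSpace Ω] {μ : Measure Ω} {N : Ω → ℕ} {B : ℕ}

lemma integral_comp_mul_of_indepFun (hN : Measurable N) {X : Ω → ℝ} (hX : Integrable X μ)
    (hind : IndepFun N X μ) (φ : ℕ → ℝ) :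
    ∫ ω, φ (N ω) * X ω ∂μ = (∫ ω, φ (N ω) ∂μ) * ∫ ω, X ω ∂μ :=
  (hind.comp (measurable_of_countable φ) measurable_id).integral_mul_eq_mul_integral
    ((measurable_of_countable φ).comp hN).aestronglyMeasurable hX.aestronglyMeasurable

variable [IsFiniteMeasure μ]

lemma integrable_comp_of_le (hN : Measurable N) (hNB : ∀ ω, N ω ≤ B) (φ : ℕ → ℝ) :
    Integrable (fun ω => φ (N ω)) μ := by
  refine .of_bound ((measurable_of_countable φ).comp hN).aestronglyMeasurable
    (∑ n ∈ Finset.range (B + 1), ‖φ n‖) (Eventually.of_forall fun ω => ?_)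
  exact Finset.single_le_sum (f := fun n => ‖φ n‖) (fun n _ => norm_nonneg _)
    (Finset.mem_range.2 (Nat.lt_succ_of_le (hNB ω)))

lemma integrable_comp_mul_of_indepFun (hN : Measurable N) (hNB : ∀ ω, N ω ≤ B) {X : Ω → ℝ}
    (hX : Integrable X μ) (hind : IndepFun N X μ) (φ : ℕ → ℝ) :
    Integrable (fun ω => φ (N ω) * X ω) μ :=
  (hind.comp (measurable_of_countable φ) measurable_id).integrable_mul
    (integrable_comp_of_le hN hNB φ) hX

variable {Y : ℕ → Ω → ℝ}

theorem integral_sum_range_of_indepFun (hN : Measurable N) (hNB : ∀ ω, N ω ≤ B)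
    (hY : ∀ i, Integrable (Y i) μ) (hind : ∀ i, IndepFun N (Y i) μ) {m : ℝ}
    (hmean : ∀ i, ∫ ω, Y i ω ∂μ = m) :
    ∫ ω, ∑ i ∈ Finset.range (N ω), Y i ω ∂μ = m * ∫ ω, (N ω : ℝ) ∂μ := by
  have hcount : ∀ n ≤ B, (n : ℝ) = ∑ i ∈ Finset.range B, (if i < n then 1 else 0) * 1 := by
    intro n hn
    simpa using sum_range_eq_sum_range_ite_mul hn fun _ => (1 : ℝ)
  calc ∫ ω, ∑ i ∈ Finset.range (N ω), Y i ω ∂μ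
      = ∫ ω, ∑ i ∈ Finset.range B, (if i < N ω then 1 else 0) * Y i ω ∂μ :=
        integral_congr_ae (Eventually.of_forall fun ω =>
          sum_range_eq_sum_range_ite_mul (hNB ω) fun i => Y i ω)
    _ = ∑ i ∈ Finset.range B, (∫ ω, (if i < N ω then 1 else 0) ∂μ) * m := by
        have hint : ∀ i ∈ Finset.range B,
            Integrable (fun ω => (if i < N ω then 1 else 0) * Y i ω) μ := fun i _ =>
          integrable_comp_mul_of_indepFun hN hNB (hY i) (hind i) fun n => if i < n then 1 else 0
        rw [integral_finsetSum _ hint]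
        refine Finset.sum_congr rfl fun i _ => ?_
        rw [integral_comp_mul_of_indepFun hN (hY i) (hind i) fun n => if i < n then 1 else 0,
          hmean]
    _ = m * ∫ ω, (N ω : ℝ) ∂μ := by
        simp_rw [hcount _ (hNB _)]
        have hint : ∀ i ∈ Finset.range B,
            Integrable (fun ω => (if i < N ω then 1 else 0) * (1 : ℝ)) μ := fun i _ =>
          integrable_comp_of_le hN hNB fun n => (if i < n then 1 else 0) * 1
        rw [integral_finsetSum _ hint, Finset.mul_sum]
        simp only [mul_one, mul_comm m]

theorem integral_sq_sum_range_of_indepFun (hN : Measurable N) (hNB : ∀ ω, N ω ≤ B)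
    (hY : ∀ i, MemLp (Y i) 2 μ) (hind : ∀ i j, IndepFun N (fun ω => Y i ω * Y j ω) μ)
    {m s : ℝ} (hcross : ∀ i j, i ≠ j → ∫ ω, Y i ω * Y j ω ∂μ = m ^ 2)
    (hsq : ∀ i, ∫ ω, Y i ω ^ 2 ∂μ = s) :
    ∫ ω, (∑ i ∈ Finset.range (N ω), Y i ω) ^ 2 ∂μ
      = m ^ 2 * ∫ ω, (N ω : ℝ) ^ 2 ∂μ + (s - m ^ 2) * ∫ ω, (N ω : ℝ) ∂μ := by
  set e : ℕ → ℕ → ℝ := fun i j => ∫ ω, (if i < N ω ∧ j < N ω then 1 else 0) ∂μ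
  have hmom : ∀ i j, ∫ ω, Y i ω * Y j ω ∂μ = m ^ 2 + if i = j then s - m ^ 2 else 0 := by
    intro i j
    by_cases hij : i = j
    · subst hij; simp [← hsq i, sq]
    · simp [hcross i j hij, hij]
  have hint : ∀ i j, Integrable (fun ω => (if i < N ω ∧ j < N ω then 1 else 0)
      * (Y i ω * Y j ω)) μ := fun i j =>
    integrable_comp_mul_of_indepFun hN hNB ((hY i).integrable_mul (hY j)) (hind i j)
      fun n => if i < n ∧ j < n then 1 else 0
  have hintN : ∀ i j, Integrable (fun ω => if i < N ω ∧ j < N ω then (1 : ℝ) else 0) μ :=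
    fun i j => integrable_comp_of_le hN hNB fun n => if i < n ∧ j < n then 1 else 0
  have hsqN : ∫ ω, (N ω : ℝ) ^ 2 ∂μ = ∑ i ∈ Finset.range B, ∑ j ∈ Finset.range B, e i j := by
    have hpt : ∀ ω, (N ω : ℝ) ^ 2 = ∑ i ∈ Finset.range B, ∑ j ∈ Finset.range B,
        if i < N ω ∧ j < N ω then 1 else 0 := fun ω => by
      simpa using sq_sum_range_eq_sum_range_ite_mul (hNB ω) fun _ => (1 : ℝ)
    simp_rw [hpt]
    rw [integral_finsetSum _ fun i _ => integrable_finsetSum _ fun j _ => hintN i j]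
    exact Finset.sum_congr rfl fun i _ => integral_finsetSum _ fun j _ => hintN i j
  have hN1 : ∫ ω, (N ω : ℝ) ∂μ = ∑ i ∈ Finset.range B, e i i := by
    have hpt : ∀ ω, (N ω : ℝ) = ∑ i ∈ Finset.range B,
        if i < N ω ∧ i < N ω then 1 else 0 := fun ω => by
      simpa using sum_range_eq_sum_range_ite_mul (hNB ω) fun _ => (1 : ℝ)
    simp_rw [hpt]
    exact integral_finsetSum _ fun i _ => hintN i i
  calc ∫ ω, (∑ i ∈ Finset.range (N ω), Y i ω) ^ 2 ∂μ
      = ∫ ω, ∑ i ∈ Finset.range B, ∑ j ∈ Finset.range B,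
          (if i < N ω ∧ j < N ω then 1 else 0) * (Y i ω * Y j ω) ∂μ :=
        integral_congr_ae (Eventually.of_forall fun ω =>
          sq_sum_range_eq_sum_range_ite_mul (hNB ω) fun i => Y i ω)
    _ = ∑ i ∈ Finset.range B, ∑ j ∈ Finset.range B,
          e i j * (m ^ 2 + if i = j then s - m ^ 2 else 0) := by
        rw [integral_finsetSum _ fun i _ => integrable_finsetSum _ fun j _ => hint i j]
        refine Finset.sum_congr rfl fun i _ => ?_
        rw [integral_finsetSum _ fun j _ => hint i j]
        refine Finset.sum_congr rfl fun j _ => ?_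
        exact (integral_comp_mul_of_indepFun (X := fun ω => Y i ω * Y j ω) hN
          ((hY i).integrable_mul (hY j)) (hind i j)
          fun n => if i < n ∧ j < n then 1 else 0).trans (by rw [hmom])
    _ = m ^ 2 * ∫ ω, (N ω : ℝ) ^ 2 ∂μ + (s - m ^ 2) * ∫ ω, (N ω : ℝ) ∂μ := by
        simp only [mul_add, mul_ite, mul_zero, Finset.sum_add_distrib, Finset.sum_ite_eq,
          hsqN, hN1, Finset.mul_sum]
        congr 1
        · simp only [mul_comm]
        · exact Finset.sum_congr rfl fun i hi => by rw [if_pos hi, mul_comm]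

end RandomSum

section Moments

variable {Ω : Type*} [MeasurableSpace Ω] {μ : Measure Ω} {ξ : ℕ × ℕ → Ω → ℕ} {L : ℕ}
  {ν : Measure ℕ}

lemma integral_comp_offspring (hξ : ∀ p, Measurable (ξ p)) (hlaw : ∀ p, μ.map (ξ p) = ν)
    (p : ℕ × ℕ) (φ : ℕ → ℝ) : ∫ ω, φ (ξ p ω) ∂μ = ∫ n, φ n ∂ν := by
  rw [← hlaw p, integral_map (hξ p).aemeasurable (measurable_of_countable φ).aestronglyMeasurable]

variable [IsProbabilityMeasure μ]

lemma memLp_offspring (hξ : ∀ p, Measurable (ξ p)) (hL : ∀ p ω, ξ p ω ≤ L) (p : ℕ × ℕ) :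
    MemLp (fun ω => (ξ p ω : ℝ)) 2 μ :=
  .of_bound ((measurable_of_countable _).comp (hξ p)).aestronglyMeasurable L
    (Eventually.of_forall fun ω => by simpa using hL p ω)

lemma integral_gw_succ (hξ : ∀ p, Measurable (ξ p)) (hind : iIndepFun ξ μ)
    (hL : ∀ p ω, ξ p ω ≤ L) (hlaw : ∀ p, μ.map (ξ p) = ν) (a k : ℕ) :
    ∫ ω, (gw ξ a (k + 1) ω : ℝ) ∂μ = (∫ n, (n : ℝ) ∂ν) * ∫ ω, (gw ξ a k ω : ℝ) ∂μ := by
  simp only [gw, Nat.cast_sum]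
  exact integral_sum_range_of_indepFun (measurable_gw a fun p _ => hξ p)
    (gw_le_mul_pow hL a k) (fun i => (memLp_offspring hξ hL (k, i)).integrable one_le_two)
    (fun i => (indepFun_gw_offspring hξ hind a k i i).comp measurable_id
      (measurable_of_countable fun q : ℕ × ℕ => (q.1 : ℝ)))
    fun i => integral_comp_offspring hξ hlaw (k, i) _

lemma integral_gw (hξ : ∀ p, Measurable (ξ p)) (hind : iIndepFun ξ μ)
    (hL : ∀ p ω, ξ p ω ≤ L) (hlaw : ∀ p, μ.map (ξ p) = ν) (a k : ℕ) :
    ∫ ω, (gw ξ a k ω : ℝ) ∂μ = a * (∫ n, (n : ℝ) ∂ν) ^ k := by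
  induction k with
  | zero => simp [gw]
  | succ k ih => rw [integral_gw_succ hξ hind hL hlaw, ih]; ring

lemma integral_gw_sq_succ (hξ : ∀ p, Measurable (ξ p)) (hind : iIndepFun ξ μ)
    (hL : ∀ p ω, ξ p ω ≤ L) (hlaw : ∀ p, μ.map (ξ p) = ν) (a k : ℕ) :
    ∫ ω, (gw ξ a (k + 1) ω : ℝ) ^ 2 ∂μ
      = (∫ n, (n : ℝ) ∂ν) ^ 2 * ∫ ω, (gw ξ a k ω : ℝ) ^ 2 ∂μ
        + (∫ n, (n : ℝ) ^ 2 ∂ν - (∫ n, (n : ℝ) ∂ν) ^ 2) * ∫ ω, (gw ξ a k ω : ℝ) ∂μ := by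
  have hcross : ∀ i j, i ≠ j →
      ∫ ω, (ξ (k, i) ω : ℝ) * (ξ (k, j) ω : ℝ) ∂μ = (∫ n, (n : ℝ) ∂ν) ^ 2 := by
    intro i j hij
    have hpair : IndepFun (ξ (k, i)) (ξ (k, j)) μ := hind.indepFun (by simpa using hij)
    calc ∫ ω, (ξ (k, i) ω : ℝ) * (ξ (k, j) ω : ℝ) ∂μ
        = (∫ ω, (ξ (k, i) ω : ℝ) ∂μ) * ∫ ω, (ξ (k, j) ω : ℝ) ∂μ :=
          (hpair.comp (measurable_of_countable fun n : ℕ => (n : ℝ))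
            (measurable_of_countable fun n : ℕ => (n : ℝ))).integral_mul_eq_mul_integral
            (memLp_offspring hξ hL _).aestronglyMeasurable
            (memLp_offspring hξ hL _).aestronglyMeasurable
      _ = (∫ n, (n : ℝ) ∂ν) ^ 2 := by
          rw [integral_comp_offspring hξ hlaw (k, i) fun n => (n : ℝ),
            integral_comp_offspring hξ hlaw (k, j) fun n => (n : ℝ), sq]
  simp only [gw, Nat.cast_sum]
  exact integral_sq_sum_range_of_indepFun (measurable_gw a fun p _ => hξ p)
    (gw_le_mul_pow hL a k) (fun i => memLp_offspring hξ hL (k, i))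
    (fun i j => (indepFun_gw_offspring hξ hind a k i j).comp measurable_id
      (measurable_of_countable fun q : ℕ × ℕ => (q.1 : ℝ) * q.2))
    hcross fun i => integral_comp_offspring hξ hlaw (k, i) fun n => (n : ℝ) ^ 2

lemma integral_gw_sq (hξ : ∀ p, Measurable (ξ p)) (hind : iIndepFun ξ μ)
    (hL : ∀ p ω, ξ p ω ≤ L) (hlaw : ∀ p, μ.map (ξ p) = ν) {m s : ℝ}
    (hm : ∫ n, (n : ℝ) ∂ν = m) (hs : ∫ n, (n : ℝ) ^ 2 ∂ν = s) (hm0 : m ≠ 0) (hm1 : m ≠ 1)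
    (a k : ℕ) :
    ∫ ω, (gw ξ a k ω : ℝ) ^ 2 ∂μ
      = a ^ 2 * m ^ (2 * k) + a * ((s - m ^ 2) / (m * (m - 1))) * (m ^ (2 * k) - m ^ k) := by
  induction k with
  | zero => simp [gw]
  | succ k ih =>
    rw [integral_gw_sq_succ hξ hind hL hlaw, ih, integral_gw hξ hind hL hlaw, hm, hs]
    have : m - 1 ≠ 0 := sub_ne_zero.2 hm1
    field_simp
    ring

theorem exists_pos_le_measure_half_pow_lt_gw (hξ : ∀ p, Measurable (ξ p))
    (hind : iIndepFun ξ μ) (hL : ∀ p ω, ξ p ω ≤ L) (hlaw : ∀ p, μ.map (ξ p) = ν) {m : ℝ}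
    (hm : ∫ n, (n : ℝ) ∂ν = m) (hm1 : 1 < m) :
    ∃ β > (0 : ℝ), ∀ k, ENNReal.ofReal β ≤ μ {ω | m ^ k / 2 < gw ξ 1 k ω} := by
  set s := ∫ n, (n : ℝ) ^ 2 ∂ν with hs
  have hs0 : 0 ≤ s := integral_nonneg fun n => sq_nonneg _
  have hmm : 0 < m * (m - 1) := mul_pos (by linarith) (by linarith)
  set C := 1 + s / (m * (m - 1))
  have hC : 0 < C := by positivity
  refine ⟨1 / (4 * C), by positivity, fun k => ?_⟩
  have hmk : 0 < m ^ k := by positivity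
  have hsecond : ∫ ω, (gw ξ 1 k ω : ℝ) ^ 2 ∂μ ≤ C * (m ^ k) ^ 2 := by
    rw [integral_gw_sq hξ hind hL hlaw hm hs.symm (by linarith) hm1.ne' 1 k]
    have hmk1 : 1 ≤ m ^ k := one_le_pow₀ hm1.le
    have hgap : (s - m ^ 2) * ((m ^ k) ^ 2 - m ^ k) ≤ s * (m ^ k) ^ 2 := by
      have : 0 ≤ (m ^ k) ^ 2 - m ^ k := by nlinarith
      nlinarith [mul_nonneg hs0 hmk.le, mul_nonneg (sq_nonneg m) this]
    calc _ = (m ^ k) ^ 2 + (s - m ^ 2) * ((m ^ k) ^ 2 - m ^ k) / (m * (m - 1)) := by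
          rw [pow_mul']; push_cast; ring
      _ ≤ (m ^ k) ^ 2 + s * (m ^ k) ^ 2 / (m * (m - 1)) := by gcongr
      _ = C * (m ^ k) ^ 2 := by ring
  have hZ : Measurable fun ω => (gw ξ 1 k ω : ℝ) :=
    (measurable_of_countable _).comp (measurable_gw 1 fun p _ => hξ p)
  have hPZ := paley_zygmund (μ := μ) hZ (fun ω => Nat.cast_nonneg _)
    (.of_bound hZ.aestronglyMeasurable (L ^ k : ℕ) (Eventually.of_forall fun ω => by
        simpa using (Nat.cast_le (α := ℝ)).2 (gw_le_mul_pow hL 1 k ω)))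
    (θ := 1 / 2) (by norm_num) (by norm_num)
  rw [integral_gw hξ hind hL hlaw, hm, show (1 / 2 : ℝ) * ((1 : ℕ) * m ^ k) = m ^ k / 2 by
    push_cast; ring] at hPZ
  have hprob := hPZ.trans (mul_le_mul_of_nonneg_left hsecond measureReal_nonneg)
  refine ENNReal.ofReal_le_of_le_toReal ((div_le_iff₀ (by positivity)).2 ?_)
  rw [measureReal_def] at hprob
  norm_num at hprob
  nlinarith [pow_pos hmk 2]

end Moments

lemma exists_lt_integral_min {ν : Measure ℕ} [IsFiniteMeasure ν] {c : ℝ}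
    (h : ENNReal.ofReal c < ∑' n : ℕ, (n : ℝ≥0∞) * ν {n}) :
    ∃ L : ℕ, c < ∫ n, ((min n L : ℕ) : ℝ) ∂ν := by
  have hsup : ∫⁻ n, (n : ℝ≥0∞) ∂ν = ⨆ L : ℕ, ∫⁻ n, ((min n L : ℕ) : ℝ≥0∞) ∂ν := by
    rw [← lintegral_iSup (fun L => measurable_of_countable _)
      fun L L' hLL' n => by exact_mod_cast min_le_min_left n hLL']
    exact lintegral_congr fun n => le_antisymm (le_iSup_of_le n (by simp))
      (iSup_le fun L => by exact_mod_cast min_le_left n L)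
  rw [← lintegral_countable', hsup, lt_iSup_iff] at h
  obtain ⟨L, hL⟩ := h
  refine ⟨L, (ENNReal.ofReal_lt_ofReal_iff'.1 ?_).1⟩
  rw [ofReal_integral_eq_lintegral_ofReal]
  · simpa only [ENNReal.ofReal_natCast] using hL
  · exact .of_bound (measurable_of_countable _).aestronglyMeasurable L
      (Eventually.of_forall fun n => by
        rw [Real.norm_natCast]; exact_mod_cast min_le_right n L)
  · exact Eventually.of_forall fun n => Nat.cast_nonneg _

theorem stmt8_general
    {Ω : Type*} [MeasurableSpace Ω] (μ : Measure Ω) [IsProbabilityMeasure μ]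
    (pX : Measure ℕ) [IsProbabilityMeasure pX]
    (μstar : ℝ) (hμ1 : 1 < μstar)
    (hμmean : ENNReal.ofReal μstar < ∑' n : ℕ, (n : ℝ≥0∞) * pX {n})
    (ξ : ℕ × ℕ → Ω → ℕ)
    (hmeas : ∀ p, Measurable (ξ p))
    (hindep : iIndepFun ξ μ)
    (hlaw : ∀ p, Measure.map (ξ p) μ = pX) :
    ∃ δ > (0 : ℝ), ∃ β > (0 : ℝ), ∀ k n : ℕ, 1 ≤ n →
      ENNReal.ofReal β ≤ μ {ω | δ * μstar ^ k < (gw ξ n k ω : ℝ)} := by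
  obtain ⟨L, hL⟩ := exists_lt_integral_min hμmean
  set ξL : ℕ × ℕ → Ω → ℕ := fun p ω => min (ξ p ω) L
  have hlawL : ∀ p, μ.map (ξL p) = pX.map (min · L) := fun p => by
    rw [← hlaw p, Measure.map_map (measurable_of_countable _) (hmeas p)]
    rfl
  have hmean : ∫ n, (n : ℝ) ∂pX.map (min · L) = ∫ n, ((min n L : ℕ) : ℝ) ∂pX :=
    integral_map (measurable_of_countable _).aemeasurable
      (measurable_of_countable _).aestronglyMeasurable
  have hmeasL : ∀ p, Measurable (ξL p) := fun p =>
    (measurable_of_countable (min · L)).comp (hmeas p)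
  have hindepL : iIndepFun ξL μ :=
    hindep.comp (fun _ n => min n L) fun _ => measurable_of_countable _
  obtain ⟨β, hβ, hbound⟩ := exists_pos_le_measure_half_pow_lt_gw hmeasL hindepL
    (fun p ω => min_le_right _ _) hlawL hmean (hμ1.trans hL)
  refine ⟨1 / 2, by norm_num, β, hβ, fun k n hn => (hbound k).trans (measure_mono fun ω hω => ?_)⟩
  calc 1 / 2 * μstar ^ k ≤ (∫ n, ((min n L : ℕ) : ℝ) ∂pX) ^ k / 2 := by
        have := pow_le_pow_left₀ (by linarith) hL.le k
        linarith
    _ < gw ξL 1 k ω := hω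
    _ ≤ gw ξ n k ω := by exact_mod_cast gw_mono (fun p ω => min_le_left _ _) hn k ω

/-- for any `1 < μ⋆ <` mean of the offspring law, there are `δ, β > 0` with
`P(Z^n_k > δ μ⋆^k) ≥ β` for all `k ≥ 0` and all starting sizes `n ≥ 1`. -/
theorem stmt8
    {Ω : Type*} [MeasurableSpace Ω] (μ : Measure Ω) [IsProbabilityMeasure μ]
    (pX : Measure ℕ) [IsProbabilityMeasure pX]
    (h0 : 0 < pX {0})
    (μstar : ℝ) (hμ1 : 1 < μstar)
    (hμmean : ENNReal.ofReal μstar < ∑' n : ℕ, (n : ℝ≥0∞) * pX {n})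
    (ξ : ℕ × ℕ → Ω → ℕ)
    (hmeas : ∀ p, Measurable (ξ p))
    (hindep : iIndepFun ξ μ)
    (hlaw : ∀ p, Measure.map (ξ p) μ = pX) :
    ∃ δ > (0 : ℝ), ∃ β > (0 : ℝ), ∀ k n : ℕ, 1 ≤ n →
      ENNReal.ofReal β ≤ μ {ω | δ * μstar ^ k < (gw ξ n k ω : ℝ)} :=
  stmt8_general μ pX μstar hμ1 hμmean ξ hmeas hindep hlaw
end

section
/- Let X be a supercritical offspring distribution with X(0) > 0, let (X^N_k) be the censored Galton-Watson process at level N started at N, and let A_0 = 0, A_{k+1} = inf{ℓ > A_k : X^N_ℓ = N} be the successive return times to N. Then there exists c > 0 such that for all N sufficiently large and all k, P(A_{k+1} > A_k + 1) ≤ exp(-cN). -/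
open MeasureTheory ProbabilityTheory Filter
open scoped ENNReal

/-- Successive return times to `N` of the censored process (`⊤` if no further return). -/
noncomputable def retA {Ω : Type*} (ξ : ℕ × ℕ → Ω → ℕ) (N : ℕ) : ℕ → Ω → ℕ∞
  | 0 => fun _ => 0
  | k + 1 => fun ω =>
      sInf {m : ℕ∞ | retA ξ N k ω < m ∧ ∃ ℓ : ℕ, m = (ℓ : ℕ∞) ∧ cgw ξ N ℓ ω = N}

/-- Survival time of the censored process: first hitting time of `0`. -/
noncomputable def UN {Ω : Type*} (ξ : ℕ × ℕ → Ω → ℕ) (N : ℕ) (ω : Ω) : ℕ∞ :=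
  sInf {m : ℕ∞ | ∃ k : ℕ, m = (k : ℕ∞) ∧ cgw ξ N k ω = 0}

/-- Last time the censored process is at level `N`. -/
noncomputable def VN {Ω : Type*} (ξ : ℕ × ℕ → Ω → ℕ) (N : ℕ) (ω : Ω) : ℕ∞ :=
  sSup {m : ℕ∞ | ∃ k : ℕ, m = (k : ℕ∞) ∧ cgw ξ N k ω = N}

/-- The number of finite return times: `T = sup {k : A_k < ∞}`. -/
noncomputable def TT {Ω : Type*} (ξ : ℕ × ℕ → Ω → ℕ) (N : ℕ) (ω : Ω) : ℕ∞ :=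
  sSup {m : ℕ∞ | ∃ k : ℕ, m = (k : ℕ∞) ∧ retA ξ N k ω < ⊤}

open Real Topology

/-!
If `A_k = a < ∞` then `X^N_a = N`, so `A_{k+1} > a + 1` forces the `N` individuals of
generation `a` to have fewer than `N` children in total. The event `{A_k = a}` is determined by
the offspring of the generations before `a`, hence is independent of generation `a`; summing
over `a` bounds the probability by `P(X_1 + ⋯ + X_N < N)`. Supercriticality gives `r < 1` with
`E[r^X] < r`, and the Chernoff bound at `t = log r` gives `P(X_1 + ⋯ + X_N ≤ N) ≤ (E[r^X] / r)^N`.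
-/

section Deterministic

variable {Ω : Type*} (ξ : ℕ × ℕ → Ω → ℕ) (N : ℕ)

lemma cgw_succ (ℓ : ℕ) (ω : Ω) :
    cgw ξ N (ℓ + 1) ω =
      if 0 < cgw ξ N ℓ ω then min N (∑ i ∈ Finset.range (cgw ξ N ℓ ω), ξ (ℓ, i) ω) else 0 :=
  rfl

lemma retA_succ (k : ℕ) (ω : Ω) :
    retA ξ N (k + 1) ω =
      sInf {m : ℕ∞ | retA ξ N k ω < m ∧ ∃ ℓ : ℕ, m = (ℓ : ℕ∞) ∧ cgw ξ N ℓ ω = N} :=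
  rfl

lemma retA_succ_eq_coe_iff {k a : ℕ} {ω : Ω} :
    retA ξ N (k + 1) ω = a ↔ ∃ b < a, retA ξ N k ω = b ∧ cgw ξ N a ω = N ∧
      ∀ ℓ, b < ℓ → ℓ < a → cgw ξ N ℓ ω ≠ N := by
  rw [retA_succ]
  set S := {m : ℕ∞ | retA ξ N k ω < m ∧ ∃ ℓ : ℕ, m = (ℓ : ℕ∞) ∧ cgw ξ N ℓ ω = N}
  constructor
  · intro h
    have hS : S.Nonempty := Set.nonempty_iff_ne_empty.2 fun hS => by simp [hS] at h
    obtain ⟨hlt, ℓ, hℓ, hcgw⟩ : (a : ℕ∞) ∈ S := h ▸ csInf_mem hS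
    obtain rfl : ℓ = a := by exact_mod_cast hℓ.symm
    obtain ⟨b, hb⟩ := ENat.ne_top_iff_exists.1 (hlt.trans (ENat.natCast_lt_top ℓ)).ne
    refine ⟨b, by rw [← hb] at hlt; exact_mod_cast hlt, hb.symm, hcgw, fun m hbm hma hm => ?_⟩
    have : (ℓ : ℕ∞) ≤ m := h ▸ sInf_le ⟨by rw [← hb]; exact_mod_cast hbm, m, rfl, hm⟩
    exact (Nat.cast_le.1 this).not_gt hma
  · rintro ⟨b, hba, hb, ha, hgap⟩
    refine le_antisymm (sInf_le ⟨by rw [hb]; exact_mod_cast hba, a, rfl, ha⟩) (le_sInf ?_)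
    rintro _ ⟨hlt, ℓ, rfl, hℓ⟩
    rw [hb, Nat.cast_lt] at hlt
    exact Nat.cast_le.2 (not_lt.1 fun hℓa => hgap ℓ hlt hℓa hℓ)

lemma cgw_eq_of_retA_eq {k a : ℕ} {ω : Ω} (h : retA ξ N k ω = a) : cgw ξ N a ω = N := by
  cases k with
  | zero =>
    obtain rfl : a = 0 := by simpa [retA, eq_comm] using h
    rfl
  | succ k =>
    obtain ⟨_, _, _, ha, _⟩ := (retA_succ_eq_coe_iff ξ N).1 h
    exact ha

lemma retA_succ_le_of_le_sum {k a : ℕ} {ω : Ω} (h : retA ξ N k ω = a)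
    (hsum : N ≤ ∑ i ∈ Finset.range N, ξ (a, i) ω) : retA ξ N (k + 1) ω ≤ (a + 1 : ℕ) := by
  have hcgw : cgw ξ N (a + 1) ω = N := by
    rw [cgw_succ, cgw_eq_of_retA_eq ξ N h]
    split_ifs with hN
    · exact min_eq_left hsum
    · omega
  exact sInf_le ⟨by rw [h]; exact_mod_cast a.lt_succ_self, a + 1, rfl, hcgw⟩

lemma setOf_retA_add_one_lt_subset (k : ℕ) :
    {ω | retA ξ N k ω + 1 < retA ξ N (k + 1) ω} ⊆
      ⋃ a : ℕ, {ω | retA ξ N k ω = a} ∩ {ω | ∑ i ∈ Finset.range N, ξ (a, i) ω < N} := by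
  intro ω hω
  obtain ⟨a, ha⟩ := ENat.ne_top_iff_exists.1 (ne_top_of_lt (lt_of_le_of_lt le_self_add hω))
  refine Set.mem_iUnion.2 ⟨a, ha.symm, show _ < N from not_le.1 fun hsum => ?_⟩
  have hle := retA_succ_le_of_le_sum ξ N ha.symm hsum
  rw [Set.mem_ofPred_eq, ← ha, ← Nat.cast_succ] at hω
  exact hω.not_ge hle

end Deterministic

section Measurability

variable {Ω : Type*} [mΩ : MeasurableSpace Ω] (ξ : ℕ × ℕ → Ω → ℕ) (N : ℕ)

lemma measurable_cgw {a : ℕ} (h : ∀ j < a, ∀ i, Measurable (ξ (j, i))) :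
    ∀ ℓ ≤ a, Measurable (cgw ξ N ℓ)
  | 0, _ => measurable_const
  | ℓ + 1, hℓ => by
    have hF : Measurable fun p : Ω × ℕ =>
        if 0 < p.2 then min N (∑ i ∈ Finset.range p.2, ξ (ℓ, i) p.1) else 0 :=
      measurable_from_prod_countable_left fun n => by
        dsimp only
        split_ifs
        · exact measurable_const.min (Finset.measurable_sum _ fun i _ => h ℓ (by omega) i)
        · exact measurable_const
    exact hF.comp (measurable_id.prodMk (measurable_cgw h ℓ (by omega)))

lemma measurableSet_retA_eq_coe (k : ℕ) {a : ℕ} (h : ∀ j < a, ∀ i, Measurable (ξ (j, i))) :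
    MeasurableSet {ω | retA ξ N k ω = a} := by
  induction k generalizing a with
  | zero =>
    simp only [retA]
    exact .const _
  | succ k ih =>
    have hN : ∀ ℓ ≤ a, MeasurableSet {ω | cgw ξ N ℓ ω = N} := fun ℓ hℓ =>
      measurable_cgw ξ N h ℓ hℓ (measurableSet_singleton N)
    simp only [retA_succ_eq_coe_iff, Set.ofPred_exists]
    refine .iUnion fun b => ?_
    by_cases hb : b < a
    · simp only [hb, true_and, Set.ofPred_and, Set.ofPred_forall]
      exact (ih fun j hj => h j (hj.trans hb)).inter <| (hN a le_rfl).inter <|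
        .iInter fun ℓ => .iInter fun _ => .iInter fun hℓ => (hN ℓ hℓ.le).compl
    · simp [hb]

end Measurability

lemma integrable_exp_mul_of_nonpos {α : Type*} {_ : MeasurableSpace α} {ν : Measure α}
    [IsFiniteMeasure ν] {X : α → ℝ} (hX : AEMeasurable X ν) (hX0 : ∀ a, 0 ≤ X a) {t : ℝ}
    (ht : t ≤ 0) : Integrable (fun a => exp (t * X a)) ν :=
  .of_mem_Icc 0 1 (measurable_exp.comp_aemeasurable (hX.const_mul t)) <| ae_of_all _ fun a =>
    ⟨(exp_pos _).le, exp_le_one_iff.2 (mul_nonpos_of_nonpos_of_nonneg ht (hX0 a))⟩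

lemma mgf_natCast_eq_tsum (ν : Measure ℕ) [IsFiniteMeasure ν] {t : ℝ} (ht : t ≤ 0) :
    mgf (fun n : ℕ => (n : ℝ)) ν t = ∑' n, exp t ^ n * ν.real {n} := by
  rw [mgf, integral_countable (integrable_exp_mul_of_nonpos measurable_from_nat.aemeasurable
    (fun n => n.cast_nonneg) ht)]
  exact tsum_congr fun n => by rw [smul_eq_mul, mul_comm, ← exp_nat_mul, mul_comm t]

lemma summable_measureReal_singleton (ν : Measure ℕ) [IsFiniteMeasure ν] :
    Summable fun n => ν.real {n} :=
  summable_measure_toReal (fun n => measurableSet_singleton n)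
    fun _ _ h => Set.disjoint_singleton.2 h

section GeneratingFunction

variable (pX : Measure ℕ) [IsProbabilityMeasure pX]

lemma tsum_measureReal_singleton : ∑' n, pX.real {n} = 1 := by
  simpa using (integral_countable (μ := pX) (integrable_const (1 : ℝ))).symm

lemma exists_finset_one_lt_sum_mul_measureReal (hmean : 1 < ∑' n : ℕ, (n : ℝ≥0∞) * pX {n}) :
    ∃ F : Finset ℕ, 1 < ∑ n ∈ F, (n : ℝ) * pX.real {n} := by
  obtain ⟨F, hF⟩ := lt_iSup_iff.1 (ENNReal.tsum_eq_iSup_sum ▸ hmean)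
  refine ⟨F, ?_⟩
  rw [← ENNReal.one_lt_ofReal, ENNReal.ofReal_sum_of_nonneg fun n _ => by positivity]
  simpa [ENNReal.ofReal_mul, ofReal_measureReal] using hF

lemma exists_tsum_pow_mul_measureReal_lt (hmean : 1 < ∑' n : ℕ, (n : ℝ≥0∞) * pX {n}) :
    ∃ r, 0 < r ∧ r < 1 ∧ ∑' n, r ^ n * pX.real {n} < r := by
  obtain ⟨F, hF⟩ := exists_finset_one_lt_sum_mul_measureReal pX hmean
  -- `(1 - r ^ n) / (1 - r) = ∑ i < n, r ^ i` tends to `n` as `r → 1`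
  have hnear : ∀ᶠ r in 𝓝 (1 : ℝ), 1 < ∑ n ∈ F, pX.real {n} * ∑ i ∈ Finset.range n, r ^ i := by
    have hcont : Continuous fun r : ℝ => ∑ n ∈ F, pX.real {n} * ∑ i ∈ Finset.range n, r ^ i := by
      fun_prop
    refine (hcont.tendsto 1).eventually_const_lt ?_
    simpa [mul_comm] using hF
  obtain ⟨r, hFr, hr⟩ :=
    ((hnear.filter_mono nhdsWithin_le_nhds).and (Ioo_mem_nhdsLT zero_lt_one)).exists
  refine ⟨r, hr.1, hr.2, ?_⟩
  have hp := summable_measureReal_singleton pX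
  have hpow : Summable fun n => r ^ n * pX.real {n} :=
    hp.of_nonneg_of_le (fun n => by have := hr.1; positivity)
      fun n => mul_le_of_le_one_left measureReal_nonneg (pow_le_one₀ hr.1.le hr.2.le)
  have hsub : Summable fun n => (1 - r ^ n) * pX.real {n} :=
    (hp.sub hpow).congr fun n => by ring
  calc ∑' n, r ^ n * pX.real {n} = 1 - ∑' n, (1 - r ^ n) * pX.real {n} := by
        rw [tsum_congr fun n => (by ring :
            (1 - r ^ n) * pX.real {n} = pX.real {n} - r ^ n * pX.real {n}),
          hp.tsum_sub hpow, tsum_measureReal_singleton]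
        ring
    _ ≤ 1 - ∑ n ∈ F, (1 - r ^ n) * pX.real {n} := by
        gcongr
        exact hsub.sum_le_tsum F fun n _ =>
          mul_nonneg (sub_nonneg.2 (pow_le_one₀ hr.1.le hr.2.le)) measureReal_nonneg
    _ = 1 - (1 - r) * ∑ n ∈ F, pX.real {n} * ∑ i ∈ Finset.range n, r ^ i := by
        rw [Finset.mul_sum]
        refine congrArg _ (Finset.sum_congr rfl fun n _ => ?_)
        rw [← mul_neg_geom_sum]
        ring
    _ < 1 - (1 - r) * 1 := by
        have := sub_pos.2 hr.2
        gcongr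
    _ = r := by ring

lemma exists_mgf_natCast_lt_exp (hmean : 1 < ∑' n : ℕ, (n : ℝ≥0∞) * pX {n}) :
    ∃ t < 0, mgf (fun n : ℕ => (n : ℝ)) pX t < exp t := by
  obtain ⟨r, hr0, hr1, hr⟩ := exists_tsum_pow_mul_measureReal_lt pX hmean
  refine ⟨log r, log_neg hr0 hr1, ?_⟩
  rwa [mgf_natCast_eq_tsum pX (log_neg hr0 hr1).le, exp_log hr0]

end GeneratingFunction

lemma measureReal_sum_le_card_le {Ω ι : Type*} [MeasurableSpace Ω] {μ : Measure Ω}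
    {Y : ι → Ω → ℕ} (hY : ∀ i, Measurable (Y i)) (hindep : iIndepFun Y μ) {ν : Measure ℕ}
    (hlaw : ∀ i, μ.map (Y i) = ν) (s : Finset ι) {t : ℝ} (ht : t ≤ 0) :
    μ.real {ω | ∑ i ∈ s, Y i ω ≤ s.card} ≤
      (exp (-t) * mgf (fun n : ℕ => (n : ℝ)) ν t) ^ s.card := by
  have := hindep.isProbabilityMeasure
  set X : ι → Ω → ℝ := fun i ω => Y i ω
  have hX : ∀ i, Measurable (X i) := fun i => measurable_from_nat.comp (hY i)
  have hXindep : iIndepFun X μ := hindep.comp (fun _ n => (n : ℝ)) fun _ => measurable_from_nat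
  have hmgf : ∀ i, mgf (X i) μ t = mgf (fun n : ℕ => (n : ℝ)) ν t := fun i => by
    rw [← hlaw i, mgf_map (hY i).aemeasurable measurable_from_nat.aestronglyMeasurable]
    rfl
  have hint : Integrable (fun ω => exp (t * (∑ i ∈ s, X i) ω)) μ :=
    integrable_exp_mul_of_nonpos (X := ∑ i ∈ s, X i)
      (Finset.aemeasurable_sum s fun i _ => (hX i).aemeasurable)
      (fun ω => by simp only [Finset.sum_apply, X]; positivity) ht
  calc μ.real {ω | ∑ i ∈ s, Y i ω ≤ s.card} = μ.real {ω | (∑ i ∈ s, X i) ω ≤ s.card} := by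
        simp only [Finset.sum_apply, X]
        norm_cast
    _ ≤ exp (-t * s.card) * mgf (∑ i ∈ s, X i) μ t := measure_le_le_exp_mul_mgf _ ht hint
    _ = (exp (-t) * mgf (fun n : ℕ => (n : ℝ)) ν t) ^ s.card := by
        rw [hXindep.mgf_sum hX, Finset.prod_congr rfl
          fun i _ => hmgf i, Finset.prod_const, mul_pow, mul_comm _ (s.card : ℝ), exp_nat_mul]

lemma measure_iUnion_inter_le_of_indep {Ω ι : Type*} [Countable ι] [MeasurableSpace Ω]
    {μ : Measure Ω} [IsProbabilityMeasure μ] {A B : ι → Set Ω} (hAm : ∀ i, MeasurableSet (A i))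
    (hA : Pairwise (Function.onFun Disjoint A)) (hAB : ∀ i, μ (A i ∩ B i) = μ (A i) * μ (B i))
    {ε : ℝ≥0∞} (hB : ∀ i, μ (B i) ≤ ε) : μ (⋃ i, A i ∩ B i) ≤ ε :=
  calc μ (⋃ i, A i ∩ B i) ≤ ∑' i, μ (A i) * μ (B i) :=
        (measure_iUnion_le _).trans_eq (tsum_congr hAB)
    _ ≤ ∑' i, μ (A i) * ε := ENNReal.tsum_le_tsum fun i => by gcongr; exact hB i
    _ = μ (⋃ i, A i) * ε := by rw [ENNReal.tsum_mul_right, measure_iUnion hA hAm]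
    _ ≤ ε := mul_le_of_le_one_left' prob_le_one

lemma measurable_of_mem_iSup₂_comap {Ω ι β : Type*} [MeasurableSpace β] (ξ : ι → Ω → β)
    {S : Set ι} {p : ι} (hp : p ∈ S) :
    Measurable[⨆ q ∈ S, MeasurableSpace.comap (ξ q) ‹_›] (ξ p) :=
  measurable_iff_comap_le.2 <|
    le_iSup₂ (f := fun q (_ : q ∈ S) => MeasurableSpace.comap (ξ q) _) p hp

lemma measure_retA_add_one_lt_le {Ω : Type*} [MeasurableSpace Ω] {μ : Measure Ω}
    [IsProbabilityMeasure μ] {ξ : ℕ × ℕ → Ω → ℕ} (hmeas : ∀ p, Measurable (ξ p))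
    (hindep : iIndepFun ξ μ) (N k : ℕ) {ε : ℝ≥0∞}
    (hrow : ∀ a, μ {ω | ∑ i ∈ Finset.range N, ξ (a, i) ω < N} ≤ ε) :
    μ {ω | retA ξ N k ω + 1 < retA ξ N (k + 1) ω} ≤ ε := by
  refine (measure_mono (setOf_retA_add_one_lt_subset ξ N k)).trans <|
    measure_iUnion_inter_le_of_indep (fun a => measurableSet_retA_eq_coe ξ N k
      fun j _ i => hmeas (j, i)) (fun a b hab => Set.disjoint_left.2 fun ω ha hb =>
        hab (by exact_mod_cast ha.symm.trans hb)) (fun a => ?_) hrow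
  let past := ⨆ p ∈ {p : ℕ × ℕ | p.1 < a}, MeasurableSpace.comap (ξ p) inferInstance
  let row := ⨆ p ∈ {p : ℕ × ℕ | p.1 = a}, MeasurableSpace.comap (ξ p) inferInstance
  have hrows : Indep past row μ := indep_iSup_of_disjoint (fun p => (hmeas p).comap_le) hindep
    (Set.disjoint_left.2 fun p h1 h2 => h1.ne h2)
  have hsum : Measurable[row] fun ω => ∑ i ∈ Finset.range N, ξ (a, i) ω :=
    Finset.measurable_sum _ fun i _ => measurable_of_mem_iSup₂_comap ξ rfl
  exact (Indep_iff _ _ _).1 hrows _ _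
    (measurableSet_retA_eq_coe (mΩ := past) ξ N k fun j hj i =>
      measurable_of_mem_iSup₂_comap ξ hj)
    (hsum (.of_discrete : MeasurableSet {x : ℕ | x < N}))

theorem stmt9_general
    {Ω : Type*} [MeasurableSpace Ω] (μ : Measure Ω) [IsProbabilityMeasure μ]
    (pX : Measure ℕ) [IsProbabilityMeasure pX]
    (hmean : 1 < ∑' n : ℕ, (n : ℝ≥0∞) * pX {n})
    (ξ : ℕ × ℕ → Ω → ℕ)
    (hmeas : ∀ p, Measurable (ξ p))
    (hindep : iIndepFun ξ μ)
    (hlaw : ∀ p, Measure.map (ξ p) μ = pX) :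
    ∃ c > (0 : ℝ), ∃ N₀ : ℕ, ∀ N ≥ N₀, ∀ k : ℕ,
      μ {ω | retA ξ N k ω + 1 < retA ξ N (k + 1) ω}
        ≤ ENNReal.ofReal (Real.exp (-c * N)) := by
  obtain ⟨t, ht, hmgf⟩ := exists_mgf_natCast_lt_exp pX hmean
  set q := exp (-t) * mgf (fun n : ℕ => (n : ℝ)) pX t
  have hq0 : 0 < q := mul_pos (exp_pos _) <| mgf_pos <|
    integrable_exp_mul_of_nonpos measurable_from_nat.aemeasurable (fun n => n.cast_nonneg) ht.le
  have hq1 : q < 1 := by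
    calc q < exp (-t) * exp t := mul_lt_mul_of_pos_left hmgf (exp_pos _)
      _ = 1 := by rw [← exp_add, neg_add_cancel, exp_zero]
  refine ⟨-log q, neg_pos.2 (log_neg hq0 hq1), 0, fun N _ k => ?_⟩
  rw [neg_neg, mul_comm, exp_nat_mul, exp_log hq0]
  refine measure_retA_add_one_lt_le hmeas hindep N k fun a => ?_
  calc μ {ω | ∑ i ∈ Finset.range N, ξ (a, i) ω < N}
      ≤ μ {ω | ∑ i ∈ Finset.range N, ξ (a, i) ω ≤ (Finset.range N).card} :=
        measure_mono fun ω (hω : _ < N) => by simpa using hω.le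
    _ ≤ ENNReal.ofReal (q ^ N) := by
        have := measureReal_sum_le_card_le (fun i => hmeas (a, i))
          (hindep.precomp (Prod.mk_right_injective a)) (fun i => hlaw (a, i)) (Finset.range N)
          ht.le
        rw [← ofReal_measureReal]
        exact ENNReal.ofReal_le_ofReal (by rwa [Finset.card_range] at this ⊢)

/-- with probability at least `1 - exp(-cN)`, each return to `N` is followed
immediately by another one: `P(A_{k+1} > A_k + 1) ≤ exp(-cN)`. -/
theorem stmt9
    {Ω : Type*} [MeasurableSpace Ω] (μ : Measure Ω) [IsProbabilityMeasure μ]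
    (pX : Measure ℕ) [IsProbabilityMeasure pX]
    (hmean : 1 < ∑' n : ℕ, (n : ℝ≥0∞) * pX {n})
    (h0 : 0 < pX {0})
    (ξ : ℕ × ℕ → Ω → ℕ)
    (hmeas : ∀ p, Measurable (ξ p))
    (hindep : iIndepFun ξ μ)
    (hlaw : ∀ p, Measure.map (ξ p) μ = pX) :
    ∃ c > (0 : ℝ), ∃ N₀ : ℕ, ∀ N ≥ N₀, ∀ k : ℕ,
      μ {ω | retA ξ N k ω + 1 < retA ξ N (k + 1) ω}
        ≤ ENNReal.ofReal (Real.exp (-c * N)) :=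
  stmt9_general μ pX hmean ξ hmeas hindep hlaw
end

section
/- In the branching-selection particle system with N particles and branching law (X, X'), the process (Y^N_k(k))_{k ≥ 0} counting the number of particles at the rightmost possible position k at time k has the same law as the Galton-Watson process with offspring X censored at level N and started at N. -/
open MeasureTheory ProbabilityTheory Filter
open scoped ENNReal

/-- Selection step: from the configuration `t` (particle counts per position, supported on
positions `≤ cap`), keep only the `N` rightmost particles. -/
def bsSelect (N : ℕ) (t : ℕ → ℕ) (cap : ℕ) : ℕ → ℕ :=
  fun ℓ => min (t ℓ) (N - ∑ j ∈ Finset.Ioc ℓ cap, t j)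

/-- The branching-selection particle system with `N` particles: `bs ζ N k ω ℓ` is the number
of particles at position `ℓ` at time `k`. Each particle at position `ℓ` is replaced by `X`
particles at `ℓ + 1` and `X'` particles at `ℓ`, where `(X, X') = ζ (ℓ, k, i)`, and then only
the `N` rightmost particles are kept. -/
noncomputable def bs {Ω : Type*} (ζ : ℕ × ℕ × ℕ → Ω → ℕ × ℕ) (N : ℕ) : ℕ → Ω → ℕ → ℕ
  | 0 => fun _ ℓ => if ℓ = 0 then N else 0
  | k + 1 => fun ω =>
      bsSelect N
        (fun ℓ =>
          (if ℓ = 0 then 0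
            else ∑ i ∈ Finset.range (bs ζ N k ω (ℓ - 1)), (ζ (ℓ - 1, k, i) ω).1)
          + ∑ i ∈ Finset.range (bs ζ N k ω ℓ), (ζ (ℓ, k, i) ω).2)
        (k + 1)


/-!
The particles at the rightmost possible position `k` at time `k` are exactly the right-moving
children of the particles at position `k - 1` at time `k - 1`, and selection keeps the `N`
rightmost particles, so `Y^N_k(k)` follows the censored Galton-Watson recursion driven by the
first coordinates `X` of the branching variables of the front particles. These are i.i.d. with
the law of `X`, and the censored Galton-Watson process is a measurable function of its
offspring array, so for i.i.d. offspring its law depends only on the offspring law.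
-/

section CensoredGaltonWatson

variable {Ω : Type*}

lemma measurable_cgw_s18 [MeasurableSpace Ω] {ξ : ℕ × ℕ → Ω → ℕ} (hξ : ∀ p, Measurable (ξ p))
    (N k : ℕ) : Measurable (cgw ξ N k) := by
  induction k with
  | zero => exact measurable_const
  | succ k ih =>
    have step : Measurable fun q : ℕ × Ω =>
        if 0 < q.1 then min N (∑ i ∈ Finset.range q.1, ξ (k, i) q.2) else 0 :=
      measurable_from_prod_countable_right fun m => by
        dsimp only
        split_ifs
        · exact measurable_const.min (Finset.measurable_sum _ fun i _ => hξ (k, i))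
        · exact measurable_const
    exact step.comp (ih.prodMk measurable_id)

lemma cgw_eq_cgw_eval (ξ : ℕ × ℕ → Ω → ℕ) (N k : ℕ) (ω : Ω) :
    cgw ξ N k ω = cgw (fun p (g : ℕ × ℕ → ℕ) => g p) N k (fun p => ξ p ω) := by
  induction k with
  | zero => rfl
  | succ k ih => simp only [cgw, ih]

theorem identDistrib_cgw {Ω' : Type*} [MeasurableSpace Ω] [MeasurableSpace Ω']
    {μ : Measure Ω} {ν : Measure Ω'} {ξ : ℕ × ℕ → Ω → ℕ} {η : ℕ × ℕ → Ω' → ℕ}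
    (h : ∀ p, IdentDistrib (ξ p) (η p) μ ν) (hξ : iIndepFun ξ μ) (hη : iIndepFun η ν) (N : ℕ) :
    IdentDistrib (fun ω k => cgw ξ N k ω) (fun ω k => cgw η N k ω) μ ν := by
  have hpath : Measurable fun (g : ℕ × ℕ → ℕ) k => cgw (fun p g => g p) N k g :=
    measurable_pi_lambda _ fun k => measurable_cgw_s18 measurable_pi_apply N k
  simp_rw [cgw_eq_cgw_eval ξ, cgw_eq_cgw_eval η]
  exact (IdentDistrib.pi h hξ hη).comp hpath

end CensoredGaltonWatson

section BranchingSelection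

variable {Ω : Type*} (ζ : ℕ × ℕ × ℕ → Ω → ℕ × ℕ) (N : ℕ)

/-- `frontOffspring ζ (k, i)` is the number of children sent one step to the right by the
`i`-th particle at position `k` at time `k`. -/
def frontOffspring : ℕ × ℕ → Ω → ℕ := fun p ω => (ζ (p.1, p.1, p.2) ω).1

lemma bs_eq_zero_of_lt {k ℓ : ℕ} (ω : Ω) (h : k < ℓ) : bs ζ N k ω ℓ = 0 := by
  induction k generalizing ℓ with
  | zero => simp [bs, Nat.pos_iff_ne_zero.mp h]
  | succ k ih =>
    simp [bs, bsSelect, Nat.pos_iff_ne_zero.mp (Nat.zero_lt_of_lt h), ih (by omega : k < ℓ - 1),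
      ih (by omega : k < ℓ)]

lemma bs_self_eq_cgw (k : ℕ) (ω : Ω) : bs ζ N k ω k = cgw (frontOffspring ζ) N k ω := by
  induction k with
  | zero => rfl
  | succ k ih =>
    have hselect : bs ζ N (k + 1) ω (k + 1)
        = min (∑ i ∈ Finset.range (bs ζ N k ω k), (ζ (k, k, i) ω).1) N := by
      simp [bs, bsSelect, bs_eq_zero_of_lt ζ N ω (Nat.lt_succ_self k)]
    rw [hselect, ih]
    simp only [cgw]
    split_ifs with hpos
    · exact min_comm _ _
    · simp [Nat.eq_zero_of_not_pos hpos]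

end BranchingSelection

theorem stmt18_general
    {Ω : Type*} [MeasurableSpace Ω] (μ : Measure Ω)
    (p2 : Measure (ℕ × ℕ))
    (ζ : ℕ × ℕ × ℕ → Ω → ℕ × ℕ)
    (hζmeas : ∀ p, Measurable (ζ p))
    (hζindep : iIndepFun ζ μ)
    (hζlaw : ∀ p, Measure.map (ζ p) μ = p2)
    (ξ : ℕ × ℕ → Ω → ℕ)
    (hmeas : ∀ p, Measurable (ξ p))
    (hindep : iIndepFun ξ μ)
    (hlaw : ∀ p, Measure.map (ξ p) μ = Measure.map Prod.fst p2)
    (N : ℕ) :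
    Measure.map (fun ω => fun k : ℕ => bs ζ N k ω k) μ
      = Measure.map (fun ω => fun k : ℕ => cgw ξ N k ω) μ := by
  have hdiag : Function.Injective fun p : ℕ × ℕ => (p.1, p.1, p.2) :=
    fun a b h => by simpa [Prod.ext_iff] using h
  have hfront_indep : iIndepFun (frontOffspring ζ) μ :=
    (hζindep.precomp hdiag).comp (fun _ => Prod.fst) fun _ => measurable_fst
  have hfront_law : ∀ p, IdentDistrib (frontOffspring ζ p) (ξ p) μ μ := fun p =>
    { aemeasurable_fst := (measurable_fst.comp (hζmeas _)).aemeasurable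
      aemeasurable_snd := (hmeas p).aemeasurable
      map_eq := by
        rw [hlaw, ← hζlaw (p.1, p.1, p.2), Measure.map_map measurable_fst (hζmeas _)]
        rfl }
  simp_rw [bs_self_eq_cgw]
  exact (identDistrib_cgw hfront_law hfront_indep hindep N).map_eq

/-- in the branching-selection system, the process counting the number of
particles at the rightmost possible position `k` at time `k` has the same law as the
Galton-Watson process with offspring `X` (the first marginal) censored at level `N`. -/
theorem stmt18
    {Ω : Type*} [MeasurableSpace Ω] (μ : Measure Ω) [IsProbabilityMeasure μ]
    (p2 : Measure (ℕ × ℕ)) [IsProbabilityMeasure p2]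
    (hmean : 1 < ∑' n : ℕ, (n : ℝ≥0∞) * (Measure.map Prod.fst p2) {n})
    (hsum : p2 {p : ℕ × ℕ | p.1 + p.2 = 0} = 0)
    (ζ : ℕ × ℕ × ℕ → Ω → ℕ × ℕ)
    (hζmeas : ∀ p, Measurable (ζ p))
    (hζindep : iIndepFun ζ μ)
    (hζlaw : ∀ p, Measure.map (ζ p) μ = p2)
    (ξ : ℕ × ℕ → Ω → ℕ)
    (hmeas : ∀ p, Measurable (ξ p))
    (hindep : iIndepFun ξ μ)
    (hlaw : ∀ p, Measure.map (ξ p) μ = Measure.map Prod.fst p2)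
    (N : ℕ) :
    Measure.map (fun ω => fun k : ℕ => bs ζ N k ω k) μ
      = Measure.map (fun ω => fun k : ℕ => cgw ξ N k ω) μ :=
  stmt18_general μ p2 ζ hζmeas hζindep hζlaw ξ hmeas hindep hlaw N
end
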